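/- Let I be a good ideal in K[x_1,…,x_n], let k_1,…,k_n be nonnegative integers with l := k_1+⋯+k_n ≥ 1, and let m = μ_1^{k_1}⋯μ_n^{k_n}. Then m is a minimal generator of I^l, i.e. m ∈ G(I^l). -/

import Mathlib

/-!
Weigh a monomial `x^β` by `∑ βᵢ / dᵢ`, so that the corner `μ₁^{k₁}⋯μₙ^{kₙ}` has weight
`l = ∑ kᵢ`. Goodness puts every minimal generator of `I^l` into a box of coordinate sum `l - 1`,
hence gives it weight at least `l - 1`. Applied to `I^{lN}` and the `N`-th power of a monomial
of `I^l`, this shows `N · weight ≥ lN - 1` for all `N`, so every monomial of `I^l` has weight at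
least `l`. A monomial dividing the corner with weight at least `l` is the corner itself.
-/

open MvPolynomial

namespace GasanovaRR

/-- The monomial `x^α` in `K[x_1,…,x_n]`. -/
noncomputable def mono (K : Type*) [Field K] {n : ℕ} (α : Fin n → ℕ) :
    MvPolynomial (Fin n) K :=
  MvPolynomial.monomial (Finsupp.equivFunOnFinite.symm α) 1

/-- `I` is a monomial ideal: it is generated by a set of monomials. -/
def IsMonomialIdeal {K : Type*} [Field K] {n : ℕ}
    (I : Ideal (MvPolynomial (Fin n) K)) : Prop :=
  ∃ A : Set (Fin n → ℕ), I = Ideal.span (mono K '' A)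

/-- `x^α` is a minimal monomial generator of `I`, i.e. `x^α ∈ G(I)`:
`x^α ∈ I` and no monomial in `I` strictly divides it. -/
def IsMinGen {K : Type*} [Field K] {n : ℕ}
    (I : Ideal (MvPolynomial (Fin n) K)) (α : Fin n → ℕ) : Prop :=
  mono K α ∈ I ∧ ∀ β : Fin n → ℕ, mono K β ∈ I → β ≤ α → β = α

/-- The point `α` lies in the box `B_{a_1,…,a_n}` (for box sizes `d_1,…,d_n`). -/
def InBox {n : ℕ} (d a α : Fin n → ℕ) : Prop :=
  ∀ i, a i * d i ≤ α i ∧ α i ≤ (a i + 1) * d i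

/-- `I` is a good ideal (w.r.t. box sizes `d`): for every `l ≥ 1`, every minimal
generator of `I^l` lies in a box whose coordinate sum is `l - 1`. -/
def IsGood {K : Type*} [Field K] {n : ℕ}
    (I : Ideal (MvPolynomial (Fin n) K)) (d : Fin n → ℕ) : Prop :=
  ∀ l : ℕ, 1 ≤ l → ∀ α : Fin n → ℕ, IsMinGen (I ^ l) α →
    ∃ a : Fin n → ℕ, InBox d a α ∧ ∑ i, a i = l - 1

/-- `I` is an `𝔪`-primary monomial ideal whose minimal generating set contains
`μ_i = x_i^{d_i}` with `d_i > 0` for each `i`. -/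
def MPrimaryWithCorners {K : Type*} [Field K] {n : ℕ}
    (I : Ideal (MvPolynomial (Fin n) K)) (d : Fin n → ℕ) : Prop :=
  IsMonomialIdeal I ∧ I ≠ ⊤ ∧ (∀ i, 0 < d i) ∧ ∀ i, IsMinGen I (Pi.single i (d i))

/-- The ideal `I_{a_1,…,a_n}` associated to the box `B_{a_1,…,a_n}`, generated by
`m / (μ_1^{a_1}⋯μ_n^{a_n})` for `m ∈ B_{a_1,…,a_n} ∩ G(I^l)`, `l = a_1+⋯+a_n+1`. -/
noncomputable def boxIdeal {K : Type*} [Field K] {n : ℕ}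
    (I : Ideal (MvPolynomial (Fin n) K)) (d a : Fin n → ℕ) :
    Ideal (MvPolynomial (Fin n) K) :=
  Ideal.span ((fun α => mono K (α - fun i => a i * d i)) ''
    {α | InBox d a α ∧ IsMinGen (I ^ (∑ i, a i + 1)) α})

/-- The Ratliff–Rush closure `Ĩ = ⋃_{k ≥ 0} (I^{k+1} : I^k)`. -/
noncomputable def ratliffRush {K : Type*} [Field K] {n : ℕ}
    (I : Ideal (MvPolynomial (Fin n) K)) : Ideal (MvPolynomial (Fin n) K) :=
  ⨆ k : ℕ, (I ^ (k + 1)).colon ((I ^ k : Ideal (MvPolynomial (Fin n) K)) : Set (MvPolynomial (Fin n) K))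

/-- The cone in `ℕ^n` with set `S` of fixed coordinates and vertex `v`. -/
def Cone {n : ℕ} (S : Set (Fin n)) (v : Fin n → ℕ) : Set (Fin n → ℕ) :=
  {b | (∀ i ∈ S, b i = v i) ∧ ∀ i ∉ S, v i ≤ b i}

/-- `I` is a very good ideal: it is good and `I_{a_1,…,a_n} = I` for all boxes. -/
def IsVeryGood {K : Type*} [Field K] {n : ℕ}
    (I : Ideal (MvPolynomial (Fin n) K)) (d : Fin n → ℕ) : Prop :=
  IsGood I d ∧ ∀ a : Fin n → ℕ, boxIdeal I d a = I

section Monomials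

variable (K : Type*) [Field K] {n : ℕ}

lemma mono_sum {ι : Type*} (s : Finset ι) (f : ι → Fin n → ℕ) :
    mono K (∑ i ∈ s, f i) = ∏ i ∈ s, mono K (f i) := by
  have h := map_sum (Finsupp.linearEquivFunOnFinite ℕ ℕ (Fin n)).symm f s
  simp only [mono, ← monomial_sum_one]
  exact congrArg (monomial · (1 : K)) h

lemma mono_nsmul (N : ℕ) (α : Fin n → ℕ) : mono K (N • α) = mono K α ^ N := by
  have h := map_nsmul (Finsupp.linearEquivFunOnFinite ℕ ℕ (Fin n)).symm N α
  simp only [mono, monomial_pow, one_pow]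
  exact congrArg (monomial · (1 : K)) h

variable {K}

lemma mono_sum_nsmul_mem_pow {ι : Type*} {I : Ideal (MvPolynomial (Fin n) K)} (s : Finset ι)
    (k : ι → ℕ) {f : ι → Fin n → ℕ} (hf : ∀ i ∈ s, mono K (f i) ∈ I) :
    mono K (∑ i ∈ s, k i • f i) ∈ I ^ ∑ i ∈ s, k i := by
  rw [mono_sum, ← Finset.prod_pow_eq_pow_sum]
  refine Ideal.prod_mem_prod fun i hi => ?_
  rw [mono_nsmul]
  exact Ideal.pow_mem_pow (hf i hi) _

lemma isMinGen_iff_minimal {J : Ideal (MvPolynomial (Fin n) K)} {α : Fin n → ℕ} :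
    IsMinGen J α ↔ Minimal (fun β => mono K β ∈ J) α :=
  ⟨fun h => minimal_iff.2 ⟨h.1, fun β hβ hle => (h.2 β hβ hle).symm⟩,
    fun h => ⟨h.prop, fun _ hβ hle => h.eq_of_le hβ hle⟩⟩

lemma exists_isMinGen_le {J : Ideal (MvPolynomial (Fin n) K)} {β : Fin n → ℕ}
    (hβ : mono K β ∈ J) : ∃ α ≤ β, IsMinGen J α := by
  simpa only [isMinGen_iff_minimal] using exists_minimal_le_of_wellFoundedLT _ β hβ

end Monomials

noncomputable def weight {n : ℕ} (d α : Fin n → ℕ) : ℚ :=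
  ∑ i, (α i : ℚ) / d i

section Weight

variable {n : ℕ} {d : Fin n → ℕ}

lemma weight_nonneg (α : Fin n → ℕ) : 0 ≤ weight d α :=
  Finset.sum_nonneg fun _ _ => by positivity

lemma weight_nsmul (N : ℕ) (α : Fin n → ℕ) : weight d (N • α) = N * weight d α := by
  simp only [weight, Finset.mul_sum, Pi.smul_apply, smul_eq_mul, Nat.cast_mul, mul_div_assoc]

lemma weight_mono {α β : Fin n → ℕ} (h : α ≤ β) : weight d α ≤ weight d β :=
  Finset.sum_le_sum fun i _ => by gcongr; exact h i

lemma eq_of_le_of_weight_le (hd : ∀ i, 0 < d i) {α β : Fin n → ℕ} (h : α ≤ β)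
    (hw : weight d β ≤ weight d α) : α = β := by
  have hle : ∀ i ∈ Finset.univ, (α i : ℚ) / d i ≤ β i / d i := fun i _ => by gcongr; exact h i
  have heq := (Finset.sum_eq_sum_iff_of_le hle).1 ((weight_mono h).antisymm hw)
  funext i
  have hdi : (d i : ℚ) ≠ 0 := by exact_mod_cast (hd i).ne'
  exact_mod_cast (div_left_inj' hdi).1 (heq i (Finset.mem_univ i))

lemma weight_corner (hd : ∀ i, 0 < d i) (k : Fin n → ℕ) :
    weight d (fun i => k i * d i) = ∑ i, k i := by
  push_cast [weight]
  refine Finset.sum_congr rfl fun i _ => ?_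
  have hdi : (d i : ℚ) ≠ 0 := by exact_mod_cast (hd i).ne'
  field_simp

lemma sum_le_weight_of_inBox (hd : ∀ i, 0 < d i) {a α : Fin n → ℕ} (h : InBox d a α) :
    ∑ i, (a i : ℚ) ≤ weight d α := by
  refine Finset.sum_le_sum fun i _ => ?_
  have hdi : (0 : ℚ) < d i := by exact_mod_cast hd i
  rw [le_div_iff₀ hdi]
  exact_mod_cast (h i).1

end Weight

namespace IsGood

variable {K : Type*} [Field K] {n : ℕ} {I : Ideal (MvPolynomial (Fin n) K)} {d : Fin n → ℕ}

lemma sub_one_le_weight (hgood : IsGood I d) (hd : ∀ i, 0 < d i) {l : ℕ} (hl : 1 ≤ l)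
    {α : Fin n → ℕ} (hα : IsMinGen (I ^ l) α) : (l : ℚ) - 1 ≤ weight d α := by
  obtain ⟨a, hbox, hsum⟩ := hgood l hl α hα
  calc (l : ℚ) - 1 = ∑ i, (a i : ℚ) := by rw [← Nat.cast_sum, hsum, Nat.cast_sub hl, Nat.cast_one]
    _ ≤ weight d α := sum_le_weight_of_inBox hd hbox

lemma le_weight (hgood : IsGood I d) (hd : ∀ i, 0 < d i) {l : ℕ} {β : Fin n → ℕ}
    (hβ : mono K β ∈ I ^ l) : (l : ℚ) ≤ weight d β := by
  rcases Nat.eq_zero_or_pos l with rfl | hl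
  · exact_mod_cast weight_nonneg β
  have hpow : ∀ N : ℕ, 0 < N → (N : ℚ) * l - 1 ≤ N * weight d β := by
    intro N hN
    have hmem : mono K (N • β) ∈ I ^ (l * N) := by
      rw [mono_nsmul, pow_mul]
      exact Ideal.pow_mem_pow hβ N
    obtain ⟨α, hαle, hα⟩ := exists_isMinGen_le hmem
    calc (N : ℚ) * l - 1 = ((l * N : ℕ) : ℚ) - 1 := by push_cast; ring
      _ ≤ weight d α := hgood.sub_one_le_weight hd (Nat.mul_pos hl hN) hα
      _ ≤ weight d (N • β) := weight_mono hαle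
      _ = N * weight d β := weight_nsmul N β
  by_contra! hlt
  have hgap : 0 < (l : ℚ) - weight d β := sub_pos.2 hlt
  obtain ⟨N, hN⟩ := exists_nat_gt ((l : ℚ) - weight d β)⁻¹
  have hNpos : 0 < N := by exact_mod_cast (inv_pos.2 hgap).trans hN
  have hNgap := (inv_lt_iff_one_lt_mul₀ hgap).1 hN
  linarith [hpow N hNpos]

end IsGood

theorem corner_isMinGen_general {K : Type*} [Field K] {n : ℕ}
    (I : Ideal (MvPolynomial (Fin n) K)) (d : Fin n → ℕ)
    (hI : MPrimaryWithCorners I d) (hgood : IsGood I d)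
    (k : Fin n → ℕ) :
    IsMinGen (I ^ (∑ i, k i)) (fun i => k i * d i) := by
  obtain ⟨-, -, hd, hμ⟩ := hI
  have hcorner : (fun i => k i * d i) = ∑ i, k i • Pi.single i (d i) := by
    ext j
    simp [Finset.sum_apply, Pi.single_apply]
  refine ⟨?_, fun β hβ hle => eq_of_le_of_weight_le hd hle ?_⟩
  · rw [hcorner]
    exact mono_sum_nsmul_mem_pow _ k fun i _ => (hμ i).1
  · rw [weight_corner hd]
    exact hgood.le_weight hd hβ

/-- Remark 4.3 (corners are needed): if `I` is good and `k_1 + ⋯ + k_n = l ≥ 1`,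
then the corner `μ_1^{k_1}⋯μ_n^{k_n}` is a minimal generator of `I^l`. -/
theorem corner_isMinGen {K : Type*} [Field K] {n : ℕ}
    (I : Ideal (MvPolynomial (Fin n) K)) (d : Fin n → ℕ)
    (hI : MPrimaryWithCorners I d) (hgood : IsGood I d)
    (k : Fin n → ℕ) (hk : 1 ≤ ∑ i, k i) :
    IsMinGen (I ^ (∑ i, k i)) (fun i => k i * d i) :=
  corner_isMinGen_general I d hI hgood k
end GasanovaRR
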